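/- arXiv:2311.15910 — 5 statements merged into one kernel-verified Lean document; each statement's English description precedes it below -/
import Mathlib

section
/- Let K be a field, E a graph, v, w ∈ E^0, and e_1, …, e_n distinct edges with s(e_i) = v, r(e_i) = w. For P, Q ∈ GL_n(wL_K(E)w), the endomorphisms satisfy φ_P = φ_Q if and only if P = Q. Consequently, φ_P = id_{L_K(E)} if and only if P is the identity matrix w·I_n of M_n(wL_K(E)w). -/
/-- A directed graph `E = (E⁰, E¹, s, r)`. -/
structure DirGraph : Type 1 where
  V : Type
  E : Type
  s : E → V
  r : E → V

/-- Generators of the Leavitt path algebra: vertices, edges and ghost edges. -/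
inductive LGen (G : DirGraph) : Type
  | vertex : G.V → LGen G
  | edge : G.E → LGen G
  | ghost : G.E → LGen G

/-- The defining relations of the Leavitt path algebra. -/
inductive LRel (K : Type) [Field K] (G : DirGraph) :
    FreeAlgebra K (LGen G) → FreeAlgebra K (LGen G) → Prop
  | vertexIdem (u : G.V) :
      LRel K G (FreeAlgebra.ι K (LGen.vertex u) * FreeAlgebra.ι K (LGen.vertex u))
        (FreeAlgebra.ι K (LGen.vertex u))
  | vertexOrth (u u' : G.V) (h : u ≠ u') :
      LRel K G (FreeAlgebra.ι K (LGen.vertex u) * FreeAlgebra.ι K (LGen.vertex u')) 0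
  | sourceEdge (e : G.E) :
      LRel K G (FreeAlgebra.ι K (LGen.vertex (G.s e)) * FreeAlgebra.ι K (LGen.edge e))
        (FreeAlgebra.ι K (LGen.edge e))
  | edgeRange (e : G.E) :
      LRel K G (FreeAlgebra.ι K (LGen.edge e) * FreeAlgebra.ι K (LGen.vertex (G.r e)))
        (FreeAlgebra.ι K (LGen.edge e))
  | ghostSource (e : G.E) :
      LRel K G (FreeAlgebra.ι K (LGen.ghost e) * FreeAlgebra.ι K (LGen.vertex (G.s e)))
        (FreeAlgebra.ι K (LGen.ghost e))
  | rangeGhost (e : G.E) :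
      LRel K G (FreeAlgebra.ι K (LGen.vertex (G.r e)) * FreeAlgebra.ι K (LGen.ghost e))
        (FreeAlgebra.ι K (LGen.ghost e))
  | ghostEdgeSame (e : G.E) :
      LRel K G (FreeAlgebra.ι K (LGen.ghost e) * FreeAlgebra.ι K (LGen.edge e))
        (FreeAlgebra.ι K (LGen.vertex (G.r e)))
  | ghostEdgeNe (e f : G.E) (h : e ≠ f) :
      LRel K G (FreeAlgebra.ι K (LGen.ghost e) * FreeAlgebra.ι K (LGen.edge f)) 0
  | ck2 (u : G.V) (hfin : {e : G.E | G.s e = u}.Finite) (hne : {e : G.E | G.s e = u}.Nonempty) :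
      LRel K G (FreeAlgebra.ι K (LGen.vertex u))
        (hfin.toFinset.sum fun e =>
          FreeAlgebra.ι K (LGen.edge e) * FreeAlgebra.ι K (LGen.ghost e))

/-- The Leavitt path algebra `L_K(E)` of a graph. -/
abbrev LPA (K : Type) [Field K] (G : DirGraph) : Type := RingQuot (LRel K G)

noncomputable def vertexEl (K : Type) [Field K] (G : DirGraph) (u : G.V) : LPA K G :=
  RingQuot.mkAlgHom K (LRel K G) (FreeAlgebra.ι K (LGen.vertex u))

noncomputable def edgeEl (K : Type) [Field K] (G : DirGraph) (e : G.E) : LPA K G :=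
  RingQuot.mkAlgHom K (LRel K G) (FreeAlgebra.ι K (LGen.edge e))

noncomputable def ghostEl (K : Type) [Field K] (G : DirGraph) (e : G.E) : LPA K G :=
  RingQuot.mkAlgHom K (LRel K G) (FreeAlgebra.ι K (LGen.ghost e))

/-- A list of edges is a (finite) path when ranges and sources match up. -/
def IsPath (G : DirGraph) (l : List G.E) : Prop :=
  l.Chain' fun e f => G.r e = G.s f

noncomputable def edgeProd (K : Type) [Field K] (G : DirGraph) (l : List G.E) : LPA K G :=
  (l.map (edgeEl K G)).prod

/-- For a path `q`, the element `q* = e_k* ⋯ e_1*`. -/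
noncomputable def ghostProd (K : Type) [Field K] (G : DirGraph) (l : List G.E) : LPA K G :=
  (l.reverse.map (ghostEl K G)).prod

/-- The degree `d` component of the ℤ-grading of `L_K(E)`:
the `K`-span of the elements `p q*` with `r(p) = r(q)` and `|p| - |q| = d`. -/
noncomputable def lpaComponent (K : Type) [Field K] (G : DirGraph) (d : ℤ) :
    Submodule K (LPA K G) :=
  Submodule.span K {x : LPA K G | ∃ p q : List G.E, ∃ u : G.V,
    IsPath G p ∧ IsPath G q ∧ (p.length : ℤ) - (q.length : ℤ) = d ∧
    x = edgeProd K G p * vertexEl K G u * ghostProd K G q}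

/-- Membership in the corner `w L_K(E) w`. -/
def InCorner (K : Type) [Field K] (G : DirGraph) (w : G.V) (x : LPA K G) : Prop :=
  vertexEl K G w * x * vertexEl K G w = x

/-- `(P, P')` is a pair consisting of an element of `GL_n(w L_K(E) w)` and its inverse:
all entries lie in the corner `w L_K(E) w`, and `P P' = P' P = w·I_n`,
the identity matrix of `M_n(w L_K(E) w)`. -/
def IsCornerGLPair (K : Type) [Field K] (G : DirGraph) (w : G.V) {n : ℕ}
    (P P' : Matrix (Fin n) (Fin n) (LPA K G)) : Prop :=
  (∀ i j, InCorner K G w (P i j)) ∧ (∀ i j, InCorner K G w (P' i j)) ∧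
    P * P' = Matrix.diagonal (fun _ => vertexEl K G w) ∧
    P' * P = Matrix.diagonal (fun _ => vertexEl K G w)

/-- The defining property of the endomorphism `φ_P` of `L_K(E)` attached to a matrix
`P` (with inverse `P'`) over the corner `w L_K(E) w`:  it fixes all vertices, fixes all
edges and ghost edges other than `e_1, …, e_n`, and sends
`e_i ↦ Σ_k e_k p_{k i}` and `e_i* ↦ Σ_k p'_{i k} e_k*`. -/
def PhiProps (K : Type) [Field K] (G : DirGraph) {n : ℕ} (es : Fin n → G.E)
    (P P' : Matrix (Fin n) (Fin n) (LPA K G)) (φ : LPA K G →ₐ[K] LPA K G) : Prop :=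
  (∀ u : G.V, φ (vertexEl K G u) = vertexEl K G u) ∧
  (∀ e : G.E, e ∉ Set.range es → φ (edgeEl K G e) = edgeEl K G e) ∧
  (∀ e : G.E, e ∉ Set.range es → φ (ghostEl K G e) = ghostEl K G e) ∧
  (∀ i, φ (edgeEl K G (es i)) = ∑ k, edgeEl K G (es k) * P k i) ∧
  (∀ i, φ (ghostEl K G (es i)) = ∑ k, P' i k * ghostEl K G (es k))

/-
The matrix `P` can be read off `φ_P`: since `e_j* e_k = δ_{jk} w` and the entries of `P` lie in
`w L_K(E) w`, we get `p_{ji} = e_j* φ_P(e_i)`. Conversely `P` determines its inverse in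
`M_n(w L_K(E) w)`, hence `φ_P` on all generators. The identity of `L_K(E)` is `φ_{w·I_n}`, so the
second equivalence is the first one with `Q = w·I_n`.
-/

section Relations

variable {K : Type} [Field K] {G : DirGraph}

lemma vertexEl_mul_self (u : G.V) : vertexEl K G u * vertexEl K G u = vertexEl K G u := by
  simpa only [vertexEl, map_mul] using RingQuot.mkAlgHom_rel K (LRel.vertexIdem (K := K) u)

lemma ghostEl_mul_edgeEl_self (e : G.E) :
    ghostEl K G e * edgeEl K G e = vertexEl K G (G.r e) := by
  simpa only [ghostEl, edgeEl, vertexEl, map_mul] using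
    RingQuot.mkAlgHom_rel K (LRel.ghostEdgeSame (K := K) e)

lemma ghostEl_mul_edgeEl_of_ne {e f : G.E} (h : e ≠ f) : ghostEl K G e * edgeEl K G f = 0 := by
  simpa only [ghostEl, edgeEl, map_mul, map_zero] using
    RingQuot.mkAlgHom_rel K (LRel.ghostEdgeNe (K := K) e f h)

lemma edgeEl_mul_vertexEl_r (e : G.E) : edgeEl K G e * vertexEl K G (G.r e) = edgeEl K G e := by
  simpa only [edgeEl, vertexEl, map_mul] using
    RingQuot.mkAlgHom_rel K (LRel.edgeRange (K := K) e)

lemma vertexEl_r_mul_ghostEl (e : G.E) : vertexEl K G (G.r e) * ghostEl K G e = ghostEl K G e := by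
  simpa only [ghostEl, vertexEl, map_mul] using
    RingQuot.mkAlgHom_rel K (LRel.rangeGhost (K := K) e)

lemma lpa_algHom_ext {A : Type} [Semiring A] [Algebra K A] {φ ψ : LPA K G →ₐ[K] A}
    (hv : ∀ u, φ (vertexEl K G u) = ψ (vertexEl K G u))
    (he : ∀ e, φ (edgeEl K G e) = ψ (edgeEl K G e))
    (hg : ∀ e, φ (ghostEl K G e) = ψ (ghostEl K G e)) : φ = ψ := by
  refine RingQuot.ringQuot_ext' _ _ _ (FreeAlgebra.hom_ext (funext fun g => ?_))
  cases g with
  | vertex u => exact hv u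
  | edge e => exact he e
  | ghost e => exact hg e

end Relations

section Corner

variable {K : Type} [Field K] {G : DirGraph} {w : G.V}

lemma InCorner.vertexEl_mul {x : LPA K G} (h : InCorner K G w x) : vertexEl K G w * x = x := by
  rw [← h, ← mul_assoc, ← mul_assoc, vertexEl_mul_self]

lemma InCorner.mul_vertexEl {x : LPA K G} (h : InCorner K G w x) : x * vertexEl K G w = x := by
  rw [← h, mul_assoc, vertexEl_mul_self]

variable {n : ℕ}

lemma diagonal_vertexEl_mul {R : Matrix (Fin n) (Fin n) (LPA K G)}
    (hR : ∀ i j, InCorner K G w (R i j)) : Matrix.diagonal (fun _ => vertexEl K G w) * R = R := by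
  ext i j
  rw [Matrix.diagonal_mul, (hR i j).vertexEl_mul]

lemma mul_diagonal_vertexEl {R : Matrix (Fin n) (Fin n) (LPA K G)}
    (hR : ∀ i j, InCorner K G w (R i j)) : R * Matrix.diagonal (fun _ => vertexEl K G w) = R := by
  ext i j
  rw [Matrix.mul_diagonal, (hR i j).mul_vertexEl]

lemma isCornerGLPair_diagonal_vertexEl :
    IsCornerGLPair K G w (Matrix.diagonal fun _ : Fin n => vertexEl K G w)
      (Matrix.diagonal fun _ => vertexEl K G w) := by
  have hcorner :
      ∀ i j, InCorner K G w (Matrix.diagonal (fun _ : Fin n => vertexEl K G w) i j) := by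
    intro i j
    by_cases hij : i = j
    · simp only [InCorner, hij, Matrix.diagonal_apply_eq, vertexEl_mul_self]
    · simp only [InCorner, Matrix.diagonal_apply_ne _ hij, mul_zero, zero_mul]
  exact ⟨hcorner, hcorner, diagonal_vertexEl_mul hcorner, diagonal_vertexEl_mul hcorner⟩

lemma IsCornerGLPair.inv_eq {P P' Q' : Matrix (Fin n) (Fin n) (LPA K G)}
    (hP : IsCornerGLPair K G w P P') (hQ : IsCornerGLPair K G w P Q') : P' = Q' :=
  calc P' = (Q' * P) * P' := by rw [hQ.2.2.2, diagonal_vertexEl_mul hP.2.1]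
    _ = Q' * (P * P') := mul_assoc _ _ _
    _ = Q' := by rw [hP.2.2.1, mul_diagonal_vertexEl hQ.2.1]

end Corner

section Phi

variable {K : Type} [Field K] {G : DirGraph} {w : G.V} {n : ℕ} {es : Fin n → G.E}

lemma ghostEl_mul_sum_edgeEl (hes : Function.Injective es) (hr : ∀ i, G.r (es i) = w)
    {x : Fin n → LPA K G} (hx : ∀ k, vertexEl K G w * x k = x k) (j : Fin n) :
    ghostEl K G (es j) * ∑ k, edgeEl K G (es k) * x k = x j := by
  rw [Finset.mul_sum, Finset.sum_eq_single_of_mem j (Finset.mem_univ j)]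
  · rw [← mul_assoc, ghostEl_mul_edgeEl_self, hr, hx]
  · intro k _ hkj
    rw [← mul_assoc, ghostEl_mul_edgeEl_of_ne (hes.ne hkj.symm), zero_mul]

lemma PhiProps.ghostEl_mul_apply_edgeEl {P P' : Matrix (Fin n) (Fin n) (LPA K G)}
    {φ : LPA K G →ₐ[K] LPA K G} (hφ : PhiProps K G es P P' φ) (hes : Function.Injective es)
    (hr : ∀ i, G.r (es i) = w) (hP : ∀ i j, InCorner K G w (P i j)) (i j : Fin n) :
    ghostEl K G (es j) * φ (edgeEl K G (es i)) = P j i := by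
  rw [hφ.2.2.2.1 i]
  exact ghostEl_mul_sum_edgeEl hes hr (fun k => (hP k i).vertexEl_mul) j

lemma PhiProps.ext {P P' : Matrix (Fin n) (Fin n) (LPA K G)} {φ ψ : LPA K G →ₐ[K] LPA K G}
    (hφ : PhiProps K G es P P' φ) (hψ : PhiProps K G es P P' ψ) : φ = ψ := by
  refine lpa_algHom_ext (fun u => by rw [hφ.1, hψ.1]) (fun e => ?_) (fun e => ?_)
  · by_cases he : e ∈ Set.range es
    · obtain ⟨i, rfl⟩ := he
      rw [hφ.2.2.2.1 i, hψ.2.2.2.1 i]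
    · rw [hφ.2.1 e he, hψ.2.1 e he]
  · by_cases he : e ∈ Set.range es
    · obtain ⟨i, rfl⟩ := he
      rw [hφ.2.2.2.2 i, hψ.2.2.2.2 i]
    · rw [hφ.2.2.1 e he, hψ.2.2.1 e he]

lemma phiProps_id (hr : ∀ i, G.r (es i) = w) :
    PhiProps K G es (Matrix.diagonal fun _ => vertexEl K G w)
      (Matrix.diagonal fun _ => vertexEl K G w) (AlgHom.id K (LPA K G)) := by
  refine ⟨fun _ => rfl, fun _ _ => rfl, fun _ _ => rfl, fun i => ?_, fun i => ?_⟩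
  · rw [Finset.sum_eq_single_of_mem i (Finset.mem_univ i)]
    · rw [Matrix.diagonal_apply_eq, ← hr i, AlgHom.id_apply, edgeEl_mul_vertexEl_r]
    · intro k _ hki
      rw [Matrix.diagonal_apply_ne _ hki, mul_zero]
  · rw [Finset.sum_eq_single_of_mem i (Finset.mem_univ i)]
    · rw [Matrix.diagonal_apply_eq, ← hr i, AlgHom.id_apply, vertexEl_r_mul_ghostEl]
    · intro k _ hki
      rw [Matrix.diagonal_apply_ne _ hki.symm, zero_mul]

lemma PhiProps.eq_iff {P P' Q Q' : Matrix (Fin n) (Fin n) (LPA K G)}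
    {φP φQ : LPA K G →ₐ[K] LPA K G} (hes : Function.Injective es) (hr : ∀ i, G.r (es i) = w)
    (hP : IsCornerGLPair K G w P P') (hQ : IsCornerGLPair K G w Q Q')
    (hφP : PhiProps K G es P P' φP) (hφQ : PhiProps K G es Q Q' φQ) : φP = φQ ↔ P = Q := by
  constructor
  · rintro rfl
    ext j i
    rw [← hφP.ghostEl_mul_apply_edgeEl hes hr hP.1,
      ← hφQ.ghostEl_mul_apply_edgeEl hes hr hQ.1]
  · rintro rfl
    obtain rfl : P' = Q' := hP.inv_eq hQ
    exact hφP.ext hφQ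

end Phi

theorem stmt1_general (K : Type) [Field K] (G : DirGraph) (n : ℕ)
    (w : G.V) (es : Fin n → G.E) (hes : Function.Injective es)
    (hr : ∀ i, G.r (es i) = w)
    (P P' Q Q' : Matrix (Fin n) (Fin n) (LPA K G))
    (hP : IsCornerGLPair K G w P P') (hQ : IsCornerGLPair K G w Q Q')
    (φP φQ : LPA K G →ₐ[K] LPA K G)
    (hφP : PhiProps K G es P P' φP) (hφQ : PhiProps K G es Q Q' φQ) :
    (φP = φQ ↔ P = Q) ∧
    (φP = AlgHom.id K (LPA K G) ↔ P = Matrix.diagonal (fun _ => vertexEl K G w)) :=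
  ⟨PhiProps.eq_iff hes hr hP hQ hφP hφQ,
    PhiProps.eq_iff hes hr hP isCornerGLPair_diagonal_vertexEl hφP (phiProps_id hr)⟩

/-- `φ_P = φ_Q` iff `P = Q`; consequently `φ_P = id` iff `P` is the
identity matrix `w·I_n` of `M_n(w L_K(E) w)`. -/
theorem stmt1 (K : Type) [Field K] (G : DirGraph) (n : ℕ) (hn : 0 < n)
    (v w : G.V) (es : Fin n → G.E) (hes : Function.Injective es)
    (hs : ∀ i, G.s (es i) = v) (hr : ∀ i, G.r (es i) = w)
    (P P' Q Q' : Matrix (Fin n) (Fin n) (LPA K G))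
    (hP : IsCornerGLPair K G w P P') (hQ : IsCornerGLPair K G w Q Q')
    (φP φQ : LPA K G →ₐ[K] LPA K G)
    (hφP : PhiProps K G es P P' φP) (hφQ : PhiProps K G es Q Q' φQ) :
    (φP = φQ ↔ P = Q) ∧
    (φP = AlgHom.id K (LPA K G) ↔ P = Matrix.diagonal (fun _ => vertexEl K G w)) :=
  stmt1_general K G n w es hes hr P P' Q Q' hP hQ φP φQ hφP hφQ
end

section
/- Let K be a field, E a graph, v, w ∈ E^0, and e_1, …, e_n distinct edges with s(e_i) = v, r(e_i) = w. For all P, Q ∈ GL_n(wL_K(E)w), one has φ_P ∘ φ_Q = φ_{P φ_P(Q)}. In particular, φ_P^m = φ_{P_m} for every positive integer m, where P_m := P φ_P(P) ⋯ φ_P^{m-1}(P). -/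
section CornerMatrix

variable {R : Type*} [Semiring R] {e : R} {n : Type*} [Fintype n] {A B : Matrix n n R}

theorem Matrix.mul_apply_mem_corner (hA : ∀ i j, A i j ∈ NonUnitalSubsemiring.corner e)
    (hB : ∀ i j, B i j ∈ NonUnitalSubsemiring.corner e) (i j : n) :
    (A * B) i j ∈ NonUnitalSubsemiring.corner e :=
  sum_mem fun k _ => mul_mem (hA i k) (hB k j)

theorem Matrix.mul_diagonal_const_of_mem_corner [DecidableEq n] (he : IsIdempotentElem e)
    (hA : ∀ i j, A i j ∈ NonUnitalSubsemiring.corner e) :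
    A * Matrix.diagonal (fun _ => e) = A := by
  ext i j
  rw [Matrix.mul_diagonal]
  exact ((Subsemigroup.mem_corner_iff he).mp (hA i j)).2

end CornerMatrix

section Leavitt

variable {K : Type} [Field K] {G : DirGraph}

theorem isIdempotentElem_vertexEl (u : G.V) : IsIdempotentElem (vertexEl K G u) := by
  rw [IsIdempotentElem, vertexEl, ← map_mul]
  exact RingQuot.mkAlgHom_rel K (LRel.vertexIdem u)

theorem inCorner_iff_mem_corner {w : G.V} {x : LPA K G} :
    InCorner K G w x ↔ x ∈ NonUnitalSubsemiring.corner (vertexEl K G w) := by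
  refine ⟨fun h => ⟨x, h⟩, fun h => ?_⟩
  obtain ⟨hl, hr⟩ := (Subsemigroup.mem_corner_iff (isIdempotentElem_vertexEl w)).mp h
  rw [InCorner, hl, hr]

theorem InCorner.map {w : G.V} {x : LPA K G} {φ : LPA K G →ₐ[K] LPA K G}
    (hφ : φ (vertexEl K G w) = vertexEl K G w) (hx : InCorner K G w x) :
    InCorner K G w (φ x) := by
  rw [InCorner, ← hφ, ← map_mul, ← map_mul, hx]

namespace IsCornerGLPair

variable {w : G.V} {n : ℕ} {P P' Q Q' : Matrix (Fin n) (Fin n) (LPA K G)}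

theorem mul (hP : IsCornerGLPair K G w P P') (hQ : IsCornerGLPair K G w Q Q') :
    IsCornerGLPair K G w (P * Q) (Q' * P') := by
  obtain ⟨hPc, hP'c, hPP', hP'P⟩ := hP
  obtain ⟨hQc, hQ'c, hQQ', hQ'Q⟩ := hQ
  simp only [inCorner_iff_mem_corner] at hPc hP'c hQc hQ'c
  have hw := isIdempotentElem_vertexEl (K := K) w
  refine ⟨fun i j => inCorner_iff_mem_corner.mpr (Matrix.mul_apply_mem_corner hPc hQc i j),
    fun i j => inCorner_iff_mem_corner.mpr (Matrix.mul_apply_mem_corner hQ'c hP'c i j), ?_, ?_⟩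
  · calc P * Q * (Q' * P') = P * (Q * Q') * P' := by simp only [mul_assoc]
      _ = P * P' := by rw [hQQ', Matrix.mul_diagonal_const_of_mem_corner hw hPc]
      _ = _ := hPP'
  · calc Q' * P' * (P * Q) = Q' * (P' * P) * Q := by simp only [mul_assoc]
      _ = Q' * Q := by rw [hP'P, Matrix.mul_diagonal_const_of_mem_corner hw hQ'c]
      _ = _ := hQ'Q

theorem map (hP : IsCornerGLPair K G w P P') {φ : LPA K G →ₐ[K] LPA K G}
    (hφ : φ (vertexEl K G w) = vertexEl K G w) :
    IsCornerGLPair K G w (P.map φ) (P'.map φ) := by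
  obtain ⟨hPc, hP'c, hPP', hP'P⟩ := hP
  have hdiag : (Matrix.diagonal fun _ : Fin n => vertexEl K G w).map φ =
      Matrix.diagonal fun _ => vertexEl K G w := by
    rw [Matrix.diagonal_map (map_zero φ), hφ]
  refine ⟨fun i j => (hPc i j).map hφ, fun i j => (hP'c i j).map hφ, ?_, ?_⟩
  · rw [← Matrix.map_mul, hPP', hdiag]
  · rw [← Matrix.map_mul, hP'P, hdiag]

end IsCornerGLPair

theorem PhiProps.comp {n : ℕ} {es : Fin n → G.E} {P P' Q Q' : Matrix (Fin n) (Fin n) (LPA K G)}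
    {φP φQ : LPA K G →ₐ[K] LPA K G}
    (hφP : PhiProps K G es P P' φP) (hφQ : PhiProps K G es Q Q' φQ) :
    PhiProps K G es (P * Q.map φP) (Q'.map φP * P') (φP.comp φQ) := by
  obtain ⟨hPv, hPe, hPg, hPei, hPgi⟩ := hφP
  obtain ⟨hQv, hQe, hQg, hQei, hQgi⟩ := hφQ
  refine ⟨fun u => ?_, fun e he => ?_, fun e he => ?_, fun i => ?_, fun i => ?_⟩
  · rw [AlgHom.comp_apply, hQv, hPv]
  · rw [AlgHom.comp_apply, hQe e he, hPe e he]
  · rw [AlgHom.comp_apply, hQg e he, hPg e he]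
  · rw [AlgHom.comp_apply, hQei i, map_sum]
    simp_rw [map_mul, hPei, Finset.sum_mul, mul_assoc]
    rw [Finset.sum_comm]
    simp_rw [Matrix.mul_apply, Finset.mul_sum, Matrix.map_apply]
  · rw [AlgHom.comp_apply, hQgi i, map_sum]
    simp_rw [map_mul, hPgi, Finset.mul_sum, ← mul_assoc]
    rw [Finset.sum_comm]
    simp_rw [Matrix.mul_apply, Finset.sum_mul, Matrix.map_apply]

end Leavitt

theorem stmt2_general (K : Type) [Field K] (G : DirGraph) (n : ℕ)
    (w : G.V) (es : Fin n → G.E)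
    (P P' Q Q' : Matrix (Fin n) (Fin n) (LPA K G))
    (hP : IsCornerGLPair K G w P P') (hQ : IsCornerGLPair K G w Q Q')
    (φP φQ : LPA K G →ₐ[K] LPA K G)
    (hφP : PhiProps K G es P P' φP) (hφQ : PhiProps K G es Q Q' φQ)
    (Pm Pm' : ℕ → Matrix (Fin n) (Fin n) (LPA K G))
    (hPm1 : Pm 1 = P) (hPmS : ∀ m, 1 ≤ m → Pm (m + 1) = Pm m * P.map ((⇑φP)^[m]))
    (hPm'1 : Pm' 1 = P') (hPm'S : ∀ m, 1 ≤ m → Pm' (m + 1) = P'.map ((⇑φP)^[m]) * Pm' m) :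
    IsCornerGLPair K G w (P * Q.map ⇑φP) (Q'.map ⇑φP * P') ∧
    PhiProps K G es (P * Q.map ⇑φP) (Q'.map ⇑φP * P') (φP.comp φQ) ∧
    (∀ m : ℕ, 1 ≤ m →
      IsCornerGLPair K G w (Pm m) (Pm' m) ∧ PhiProps K G es (Pm m) (Pm' m) (φP ^ m)) := by
  refine ⟨hP.mul (hQ.map (hφP.1 w)), hφP.comp hφQ, fun m hm => ?_⟩
  induction m, hm using Nat.le_induction with
  | base => rw [hPm1, hPm'1, pow_one]; exact ⟨hP, hφP⟩
  | succ m hm ih =>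
    obtain ⟨hPm, hφPm⟩ := ih
    rw [hPmS m hm, hPm'S m hm, ← AlgHom.coe_pow, pow_succ]
    exact ⟨hPm.mul (hP.map (hφPm.1 w)), hφPm.comp hφP⟩

/-- `φ_P ∘ φ_Q = φ_{P φ_P(Q)}`; in particular `φ_P^m = φ_{P_m}` for every
positive integer `m`, where `P_m := P φ_P(P) ⋯ φ_P^{m-1}(P)` (with inverse
`P_m^{-1} = φ_P^{m-1}(P') ⋯ φ_P(P') P'`).  (By the uniqueness of the endomorphism
attached to a matrix, the conclusions say precisely that `φ_P ∘ φ_Q` is the endomorphism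
attached to `P φ_P(Q)` and that `φ_P^m` is the endomorphism attached to `P_m`.) -/
theorem stmt2 (K : Type) [Field K] (G : DirGraph) (n : ℕ) (hn : 0 < n)
    (v w : G.V) (es : Fin n → G.E) (hes : Function.Injective es)
    (hs : ∀ i, G.s (es i) = v) (hr : ∀ i, G.r (es i) = w)
    (P P' Q Q' : Matrix (Fin n) (Fin n) (LPA K G))
    (hP : IsCornerGLPair K G w P P') (hQ : IsCornerGLPair K G w Q Q')
    (φP φQ : LPA K G →ₐ[K] LPA K G)
    (hφP : PhiProps K G es P P' φP) (hφQ : PhiProps K G es Q Q' φQ)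
    (Pm Pm' : ℕ → Matrix (Fin n) (Fin n) (LPA K G))
    (hPm1 : Pm 1 = P) (hPmS : ∀ m, 1 ≤ m → Pm (m + 1) = Pm m * P.map ((⇑φP)^[m]))
    (hPm'1 : Pm' 1 = P') (hPm'S : ∀ m, 1 ≤ m → Pm' (m + 1) = P'.map ((⇑φP)^[m]) * Pm' m) :
    IsCornerGLPair K G w (P * Q.map ⇑φP) (Q'.map ⇑φP * P') ∧
    PhiProps K G es (P * Q.map ⇑φP) (Q'.map ⇑φP * P') (φP.comp φQ) ∧
    (∀ m : ℕ, 1 ≤ m →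
      IsCornerGLPair K G w (Pm m) (Pm' m) ∧ PhiProps K G es (Pm m) (Pm' m) (φP ^ m)) :=
  stmt2_general K G n w es P P' Q Q' hP hQ φP φQ hφP hφQ Pm Pm' hPm1 hPmS hPm'1 hPm'S
end

section
/- Let K be a field, E a graph, v, w ∈ E^0, and e_1, …, e_n distinct edges with s(e_i) = v, r(e_i) = w. If P = (p_{ij}) ∈ GL_n(wL_K(E)_0 w), i.e., P is invertible over the corner of the degree-zero component, with P^{-1} = (p'_{ij}), then there exists a unique graded K-algebra homomorphism φ_P : L_K(E) → L_K(E) satisfying φ_P(u) = u for all u ∈ E^0, φ_P(e) = e and φ_P(e*) = e* for all e ∈ E^1 \ {e_1, …, e_n}, and φ_P(e_i) = Σ_{k=1}^n e_k p_{ki}, φ_P(e_i*) = Σ_{k=1}^n p'_{ik} e_k* for all 1 ≤ i ≤ n. -/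
namespace LeavittPath

variable {K : Type} [Field K] {G : DirGraph}

section Relations

private lemma mk_eq_of_rel {a b : FreeAlgebra K (LGen G)} (h : LRel K G a b) :
    RingQuot.mkAlgHom K (LRel K G) a = RingQuot.mkAlgHom K (LRel K G) b :=
  RingQuot.mkAlgHom_rel K h

lemma vertexEl_mul_self (u : G.V) : vertexEl K G u * vertexEl K G u = vertexEl K G u := by
  simpa [vertexEl] using mk_eq_of_rel (LRel.vertexIdem (K := K) u)

lemma vertexEl_mul_vertexEl_of_ne {u u' : G.V} (h : u ≠ u') :
    vertexEl K G u * vertexEl K G u' = 0 := by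
  simpa [vertexEl] using mk_eq_of_rel (LRel.vertexOrth (K := K) u u' h)

lemma vertexEl_source_mul_edgeEl (e : G.E) :
    vertexEl K G (G.s e) * edgeEl K G e = edgeEl K G e := by
  simpa [vertexEl, edgeEl] using mk_eq_of_rel (LRel.sourceEdge (K := K) e)

lemma edgeEl_mul_vertexEl_range (e : G.E) :
    edgeEl K G e * vertexEl K G (G.r e) = edgeEl K G e := by
  simpa [vertexEl, edgeEl] using mk_eq_of_rel (LRel.edgeRange (K := K) e)

lemma ghostEl_mul_vertexEl_source (e : G.E) :
    ghostEl K G e * vertexEl K G (G.s e) = ghostEl K G e := by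
  simpa [vertexEl, ghostEl] using mk_eq_of_rel (LRel.ghostSource (K := K) e)

lemma vertexEl_range_mul_ghostEl (e : G.E) :
    vertexEl K G (G.r e) * ghostEl K G e = ghostEl K G e := by
  simpa [vertexEl, ghostEl] using mk_eq_of_rel (LRel.rangeGhost (K := K) e)

lemma ghostEl_mul_edgeEl_self (e : G.E) :
    ghostEl K G e * edgeEl K G e = vertexEl K G (G.r e) := by
  simpa [vertexEl, edgeEl, ghostEl] using mk_eq_of_rel (LRel.ghostEdgeSame (K := K) e)

lemma ghostEl_mul_edgeEl_of_ne {e f : G.E} (h : e ≠ f) : ghostEl K G e * edgeEl K G f = 0 := by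
  simpa [edgeEl, ghostEl] using mk_eq_of_rel (LRel.ghostEdgeNe (K := K) e f h)

lemma vertexEl_eq_sum (u : G.V) (hfin : {e : G.E | G.s e = u}.Finite)
    (hne : {e : G.E | G.s e = u}.Nonempty) :
    vertexEl K G u = ∑ e ∈ hfin.toFinset, edgeEl K G e * ghostEl K G e := by
  simpa [vertexEl, edgeEl, ghostEl, map_sum] using mk_eq_of_rel (LRel.ck2 (K := K) u hfin hne)

lemma vertexEl_mul_edgeEl_of_ne {u : G.V} {e : G.E} (h : u ≠ G.s e) :
    vertexEl K G u * edgeEl K G e = 0 := by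
  rw [← vertexEl_source_mul_edgeEl e, ← mul_assoc, vertexEl_mul_vertexEl_of_ne h, zero_mul]

lemma ghostEl_mul_vertexEl_of_ne {e : G.E} {u : G.V} (h : u ≠ G.s e) :
    ghostEl K G e * vertexEl K G u = 0 := by
  rw [← ghostEl_mul_vertexEl_source e, mul_assoc, vertexEl_mul_vertexEl_of_ne h.symm, mul_zero]

lemma edgeEl_mul_edgeEl_of_ne {e f : G.E} (h : G.r e ≠ G.s f) :
    edgeEl K G e * edgeEl K G f = 0 := by
  rw [← edgeEl_mul_vertexEl_range e, mul_assoc, vertexEl_mul_edgeEl_of_ne h, mul_zero]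

lemma ghostEl_mul_ghostEl_of_ne {e f : G.E} (h : G.s e ≠ G.r f) :
    ghostEl K G e * ghostEl K G f = 0 := by
  rw [← vertexEl_range_mul_ghostEl f, ← mul_assoc, ghostEl_mul_vertexEl_of_ne h.symm, zero_mul]

end Relations

section Grading

@[simp] lemma edgeProd_nil : edgeProd K G [] = 1 := rfl

@[simp] lemma ghostProd_nil : ghostProd K G [] = 1 := rfl

@[simp] lemma edgeProd_cons (e : G.E) (p : List G.E) :
    edgeProd K G (e :: p) = edgeEl K G e * edgeProd K G p := by
  simp [edgeProd]

@[simp] lemma ghostProd_cons (e : G.E) (q : List G.E) :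
    ghostProd K G (e :: q) = ghostProd K G q * ghostEl K G e := by
  simp [ghostProd]

lemma ghostProd_append_singleton (q : List G.E) (e : G.E) :
    ghostProd K G (q ++ [e]) = ghostEl K G e * ghostProd K G q := by
  simp [ghostProd]

lemma edgeProd_eq_zero_of_not_isPath : ∀ {p : List G.E}, ¬ IsPath G p → edgeProd K G p = 0
  | [], h => absurd List.isChain_nil h
  | [e], h => absurd (List.isChain_singleton e) h
  | e :: f :: p, h => by
    by_cases hef : G.r e = G.s f
    · have hp : ¬ IsPath G (f :: p) := fun hp => h (List.isChain_cons_cons.2 ⟨hef, hp⟩)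
      rw [edgeProd_cons, edgeProd_eq_zero_of_not_isPath hp, mul_zero]
    · rw [edgeProd_cons, edgeProd_cons, ← mul_assoc, edgeEl_mul_edgeEl_of_ne hef, zero_mul]

lemma ghostProd_eq_zero_of_not_isPath : ∀ {q : List G.E}, ¬ IsPath G q → ghostProd K G q = 0
  | [], h => absurd List.isChain_nil h
  | [e], h => absurd (List.isChain_singleton e) h
  | e :: f :: q, h => by
    by_cases hef : G.r e = G.s f
    · have hq : ¬ IsPath G (f :: q) := fun hq => h (List.isChain_cons_cons.2 ⟨hef, hq⟩)
      rw [ghostProd_cons, ghostProd_eq_zero_of_not_isPath hq, zero_mul]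
    · rw [ghostProd_cons, ghostProd_cons, mul_assoc,
        ghostEl_mul_ghostEl_of_ne (Ne.symm hef), mul_zero]

/-- The path conditions in `lpaComponent` are harmless: products along non-paths vanish. -/
lemma monomial_mem_lpaComponent (p q : List G.E) (u : G.V) {d : ℤ}
    (hd : (p.length : ℤ) - q.length = d) :
    edgeProd K G p * vertexEl K G u * ghostProd K G q ∈ lpaComponent K G d := by
  by_cases hp : IsPath G p
  · by_cases hq : IsPath G q
    · exact Submodule.subset_span ⟨p, q, u, hp, hq, hd, rfl⟩
    · simp [ghostProd_eq_zero_of_not_isPath hq]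
  · simp [edgeProd_eq_zero_of_not_isPath hp]

lemma vertexEl_mem_lpaComponent (u : G.V) : vertexEl K G u ∈ lpaComponent K G 0 := by
  simpa using monomial_mem_lpaComponent (K := K) [] [] u (d := 0) (by simp)

lemma edgeEl_mem_lpaComponent (e : G.E) : edgeEl K G e ∈ lpaComponent K G 1 := by
  simpa [edgeEl_mul_vertexEl_range] using
    monomial_mem_lpaComponent (K := K) [e] [] (G.r e) (d := 1) (by simp)

lemma ghostEl_mem_lpaComponent (e : G.E) : ghostEl K G e ∈ lpaComponent K G (-1) := by
  simpa [vertexEl_range_mul_ghostEl] using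
    monomial_mem_lpaComponent (K := K) [] [e] (G.r e) (d := -1) (by simp)

lemma map_mem_lpaComponent_of_monomial (f : LPA K G →ₗ[K] LPA K G) {d d' : ℤ}
    (hf : ∀ (p q : List G.E) (u : G.V), (p.length : ℤ) - q.length = d →
      f (edgeProd K G p * vertexEl K G u * ghostProd K G q) ∈ lpaComponent K G d')
    {x : LPA K G} (hx : x ∈ lpaComponent K G d) : f x ∈ lpaComponent K G d' :=
  (Submodule.span_le (p := (lpaComponent K G d').comap f)).2
    (by rintro _ ⟨p, q, u, -, -, hd, rfl⟩; exact hf p q u hd) hx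

lemma mul_mem_lpaComponent_of_monomial {a : LPA K G} {k : ℤ}
    (ha : ∀ (p q : List G.E) (u : G.V), a * (edgeProd K G p * vertexEl K G u * ghostProd K G q)
      ∈ lpaComponent K G (k + ((p.length : ℤ) - q.length)))
    {d : ℤ} {x : LPA K G} (hx : x ∈ lpaComponent K G d) : a * x ∈ lpaComponent K G (k + d) :=
  map_mem_lpaComponent_of_monomial (LinearMap.mulLeft K a) (fun p q u hd => hd ▸ ha p q u) hx

lemma vertexEl_mul_mem_lpaComponent (v : G.V) {d : ℤ} {x : LPA K G}
    (hx : x ∈ lpaComponent K G d) : vertexEl K G v * x ∈ lpaComponent K G d := by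
  rw [← zero_add d]
  refine mul_mem_lpaComponent_of_monomial (fun p q u => ?_) hx
  rw [zero_add]
  rcases p with _ | ⟨e, p⟩
  · by_cases hvu : v = u
    · simpa [hvu, ← mul_assoc, vertexEl_mul_self] using
        monomial_mem_lpaComponent (K := K) [] q u rfl
    · simp [← mul_assoc, vertexEl_mul_vertexEl_of_ne hvu]
  · by_cases hve : v = G.s e
    · simpa [hve, ← mul_assoc, vertexEl_source_mul_edgeEl] using
        monomial_mem_lpaComponent (K := K) (e :: p) q u rfl
    · simp [← mul_assoc, vertexEl_mul_edgeEl_of_ne hve]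

lemma edgeEl_mul_mem_lpaComponent (e : G.E) {d : ℤ} {x : LPA K G}
    (hx : x ∈ lpaComponent K G d) : edgeEl K G e * x ∈ lpaComponent K G (1 + d) := by
  refine mul_mem_lpaComponent_of_monomial (fun p q u => ?_) hx
  simpa [← mul_assoc] using
    monomial_mem_lpaComponent (K := K) (e :: p) q u (by push_cast [List.length_cons]; ring)

lemma ghostEl_mul_mem_lpaComponent (e : G.E) {d : ℤ} {x : LPA K G}
    (hx : x ∈ lpaComponent K G d) : ghostEl K G e * x ∈ lpaComponent K G (-1 + d) := by
  refine mul_mem_lpaComponent_of_monomial (fun p q u => ?_) hx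
  rcases p with _ | ⟨f, p⟩
  · by_cases hue : u = G.s e
    · -- `e* u q* = r(e) (q ++ [e])*`
      simpa [hue, ← mul_assoc, ghostEl_mul_vertexEl_source, vertexEl_range_mul_ghostEl,
        ghostProd_append_singleton] using
        monomial_mem_lpaComponent (K := K) [] (q ++ [e]) (G.r e)
          (d := -1 + (0 - q.length)) (by simp)
    · simp [← mul_assoc, ghostEl_mul_vertexEl_of_ne hue]
  · by_cases hef : e = f
    · subst hef
      simpa [mul_assoc, ← mul_assoc (ghostEl K G e), ghostEl_mul_edgeEl_self] using
        vertexEl_mul_mem_lpaComponent (G.r e) (monomial_mem_lpaComponent (K := K) p q u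
          (d := -1 + ((p.length + 1 : ℕ) - q.length)) (by push_cast; ring))
    · simp [mul_assoc, ← mul_assoc (ghostEl K G e), ghostEl_mul_edgeEl_of_ne hef]

lemma list_prod_mul_mem_lpaComponent {l : List (LPA K G)} {k : ℤ}
    (hl : ∀ a ∈ l, ∀ d, ∀ x ∈ lpaComponent K G d, a * x ∈ lpaComponent K G (k + d))
    {d : ℤ} {x : LPA K G} (hx : x ∈ lpaComponent K G d) :
    l.prod * x ∈ lpaComponent K G (l.length * k + d) := by
  induction l generalizing d x with
  | nil => simpa using hx
  | cons a l ih =>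
    rw [List.prod_cons, mul_assoc]
    convert hl a (by simp) _ _ (ih (fun b hb => hl b (by simp [hb])) hx) using 2
    push_cast [List.length_cons]
    ring

lemma mul_mem_lpaComponent {d₁ d₂ : ℤ} {x y : LPA K G} (hx : x ∈ lpaComponent K G d₁)
    (hy : y ∈ lpaComponent K G d₂) : x * y ∈ lpaComponent K G (d₁ + d₂) := by
  refine map_mem_lpaComponent_of_monomial (LinearMap.mulRight K y) (fun p q u hd => ?_) hx
  subst hd
  have hq := list_prod_mul_mem_lpaComponent (l := q.reverse.map (ghostEl K G))
    (by simpa using fun e _ _ _ => ghostEl_mul_mem_lpaComponent e) hy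
  have hp := list_prod_mul_mem_lpaComponent (l := p.map (edgeEl K G))
    (by simpa using fun e _ _ _ => edgeEl_mul_mem_lpaComponent e)
    (vertexEl_mul_mem_lpaComponent u hq)
  rw [LinearMap.mulRight_apply, mul_assoc, mul_assoc, edgeProd, ghostProd]
  convert hp using 2
  simp only [List.length_map, List.length_reverse]
  ring

lemma mul_list_prod_mem_lpaComponent {l : List (LPA K G)} {k : ℤ}
    (hl : ∀ a ∈ l, a ∈ lpaComponent K G k) {d : ℤ} {x : LPA K G}
    (hx : x ∈ lpaComponent K G d) : x * l.prod ∈ lpaComponent K G (d + l.length * k) := by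
  induction l generalizing d x with
  | nil => simpa using hx
  | cons a l ih =>
    rw [List.prod_cons, ← mul_assoc]
    convert ih (fun b hb => hl b (by simp [hb])) (mul_mem_lpaComponent hx (hl a (by simp)))
      using 2
    push_cast [List.length_cons]
    ring

lemma map_mem_lpaComponent {φ : LPA K G →ₐ[K] LPA K G}
    (hv : ∀ u, φ (vertexEl K G u) ∈ lpaComponent K G 0)
    (hE : ∀ e, φ (edgeEl K G e) ∈ lpaComponent K G 1)
    (hG : ∀ e, φ (ghostEl K G e) ∈ lpaComponent K G (-1))
    {d : ℤ} {x : LPA K G} (hx : x ∈ lpaComponent K G d) : φ x ∈ lpaComponent K G d := by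
  refine map_mem_lpaComponent_of_monomial φ.toLinearMap (fun p q u hd => ?_) hx
  subst hd
  have hq := mul_list_prod_mem_lpaComponent (l := q.reverse.map (φ ∘ ghostEl K G))
    (by simpa using fun e _ => hG e) (hv u)
  have hp := list_prod_mul_mem_lpaComponent (l := p.map (φ ∘ edgeEl K G))
    (by simpa using fun e _ _ _ hx => mul_mem_lpaComponent (hE e) hx) hq
  rw [AlgHom.toLinearMap_apply, map_mul, map_mul, mul_assoc, edgeProd, ghostProd,
    map_list_prod, map_list_prod, List.map_map, List.map_map]
  convert hp using 2
  simp only [List.length_map, List.length_reverse]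
  ring

end Grading


section Construction

variable {n : ℕ} (es : Fin n → G.E) (P P' : Matrix (Fin n) (Fin n) (LPA K G))

noncomputable def edgeImage : G.E → LPA K G :=
  Function.extend es (fun i => ∑ k, edgeEl K G (es k) * P k i) (edgeEl K G)

noncomputable def ghostImage : G.E → LPA K G :=
  Function.extend es (fun i => ∑ k, P' i k * ghostEl K G (es k)) (ghostEl K G)

noncomputable def genImage : LGen G → LPA K G
  | .vertex u => vertexEl K G u
  | .edge e => edgeImage es P e
  | .ghost e => ghostImage es P' e

variable {es P P'}

lemma edgeImage_apply (hes : Function.Injective es) (i : Fin n) :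
    edgeImage es P (es i) = ∑ k, edgeEl K G (es k) * P k i :=
  hes.extend_apply _ _ i

lemma ghostImage_apply (hes : Function.Injective es) (i : Fin n) :
    ghostImage es P' (es i) = ∑ k, P' i k * ghostEl K G (es k) :=
  hes.extend_apply _ _ i

lemma edgeImage_of_notMem_range {e : G.E} (he : e ∉ Set.range es) :
    edgeImage es P e = edgeEl K G e :=
  Function.extend_apply' _ _ e he

lemma ghostImage_of_notMem_range {e : G.E} (he : e ∉ Set.range es) :
    ghostImage es P' e = ghostEl K G e :=
  Function.extend_apply' _ _ e he

lemma InCorner.vertexEl_mul {w : G.V} {x : LPA K G} (h : InCorner K G w x) :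
    vertexEl K G w * x = x := by
  rw [← h, ← mul_assoc, ← mul_assoc, vertexEl_mul_self]

lemma InCorner.mul_vertexEl {w : G.V} {x : LPA K G} (h : InCorner K G w x) :
    x * vertexEl K G w = x := by
  rw [← h, mul_assoc, vertexEl_mul_self]

variable {v w : G.V}

lemma vertexEl_source_mul_edgeImage (hes : Function.Injective es) (hs : ∀ i, G.s (es i) = v)
    (e : G.E) : vertexEl K G (G.s e) * edgeImage es P e = edgeImage es P e := by
  by_cases he : e ∈ Set.range es
  · obtain ⟨i, rfl⟩ := he
    rw [edgeImage_apply hes, Finset.mul_sum]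
    refine Finset.sum_congr rfl fun k _ => ?_
    rw [← mul_assoc, hs i, ← hs k, vertexEl_source_mul_edgeEl]
  · rw [edgeImage_of_notMem_range he, vertexEl_source_mul_edgeEl]

lemma ghostImage_mul_vertexEl_source (hes : Function.Injective es) (hs : ∀ i, G.s (es i) = v)
    (e : G.E) : ghostImage es P' e * vertexEl K G (G.s e) = ghostImage es P' e := by
  by_cases he : e ∈ Set.range es
  · obtain ⟨i, rfl⟩ := he
    rw [ghostImage_apply hes, Finset.sum_mul]
    refine Finset.sum_congr rfl fun k _ => ?_
    rw [mul_assoc, hs i, ← hs k, ghostEl_mul_vertexEl_source]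
  · rw [ghostImage_of_notMem_range he, ghostEl_mul_vertexEl_source]

lemma edgeImage_mul_vertexEl_range (hes : Function.Injective es) (hr : ∀ i, G.r (es i) = w)
    (hP : ∀ i j, InCorner K G w (P i j)) (e : G.E) :
    edgeImage es P e * vertexEl K G (G.r e) = edgeImage es P e := by
  by_cases he : e ∈ Set.range es
  · obtain ⟨i, rfl⟩ := he
    rw [edgeImage_apply hes, Finset.sum_mul]
    refine Finset.sum_congr rfl fun k _ => ?_
    rw [mul_assoc, hr i, InCorner.mul_vertexEl (hP k i)]
  · rw [edgeImage_of_notMem_range he, edgeEl_mul_vertexEl_range]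

lemma vertexEl_range_mul_ghostImage (hes : Function.Injective es) (hr : ∀ i, G.r (es i) = w)
    (hP' : ∀ i j, InCorner K G w (P' i j)) (e : G.E) :
    vertexEl K G (G.r e) * ghostImage es P' e = ghostImage es P' e := by
  by_cases he : e ∈ Set.range es
  · obtain ⟨i, rfl⟩ := he
    rw [ghostImage_apply hes, Finset.mul_sum]
    refine Finset.sum_congr rfl fun k _ => ?_
    rw [← mul_assoc, hr i, InCorner.vertexEl_mul (hP' i k)]
  · rw [ghostImage_of_notMem_range he, vertexEl_range_mul_ghostEl]

lemma ghostEl_mul_edgeImage_apply (hes : Function.Injective es) (hr : ∀ i, G.r (es i) = w)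
    (hP : ∀ i j, InCorner K G w (P i j)) (k j : Fin n) :
    ghostEl K G (es k) * edgeImage es P (es j) = P k j := by
  rw [edgeImage_apply hes, Finset.mul_sum, Finset.sum_eq_single k]
  · rw [← mul_assoc, ghostEl_mul_edgeEl_self, hr, InCorner.vertexEl_mul (hP k j)]
  · intro l _ hlk
    rw [← mul_assoc, ghostEl_mul_edgeEl_of_ne (hes.ne hlk.symm), zero_mul]
  · simp

lemma ghostImage_mul_edgeImage_apply (hes : Function.Injective es) (hr : ∀ i, G.r (es i) = w)
    (hP : ∀ i j, InCorner K G w (P i j)) (i j : Fin n) :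
    ghostImage es P' (es i) * edgeImage es P (es j) = (P' * P) i j := by
  simp only [ghostImage_apply hes, Finset.sum_mul, mul_assoc,
    ghostEl_mul_edgeImage_apply hes hr hP, Matrix.mul_apply]

lemma ghostEl_mul_edgeImage_of_ne (hes : Function.Injective es) {e f : G.E}
    (he : e ∉ Set.range es) (hef : e ≠ f) : ghostEl K G e * edgeImage es P f = 0 := by
  by_cases hf : f ∈ Set.range es
  · obtain ⟨j, rfl⟩ := hf
    rw [edgeImage_apply hes, Finset.mul_sum]
    refine Finset.sum_eq_zero fun l _ => ?_
    rw [← mul_assoc, ghostEl_mul_edgeEl_of_ne fun h => he ⟨l, h.symm⟩, zero_mul]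
  · rw [edgeImage_of_notMem_range hf, ghostEl_mul_edgeEl_of_ne hef]

lemma ghostImage_mul_edgeEl_of_ne (hes : Function.Injective es) {e f : G.E}
    (hf : f ∉ Set.range es) (hef : e ≠ f) : ghostImage es P' e * edgeEl K G f = 0 := by
  by_cases he : e ∈ Set.range es
  · obtain ⟨i, rfl⟩ := he
    rw [ghostImage_apply hes, Finset.sum_mul]
    refine Finset.sum_eq_zero fun k _ => ?_
    rw [mul_assoc, ghostEl_mul_edgeEl_of_ne fun h => hf ⟨k, h⟩, mul_zero]
  · rw [ghostImage_of_notMem_range he, ghostEl_mul_edgeEl_of_ne hef]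

lemma ghostImage_mul_edgeImage_self (hes : Function.Injective es) (hr : ∀ i, G.r (es i) = w)
    (hP : ∀ i j, InCorner K G w (P i j))
    (hP'P : P' * P = Matrix.diagonal fun _ => vertexEl K G w) (e : G.E) :
    ghostImage es P' e * edgeImage es P e = vertexEl K G (G.r e) := by
  by_cases he : e ∈ Set.range es
  · obtain ⟨i, rfl⟩ := he
    rw [ghostImage_mul_edgeImage_apply hes hr hP, hP'P, Matrix.diagonal_apply_eq, hr]
  · rw [ghostImage_of_notMem_range he, edgeImage_of_notMem_range he, ghostEl_mul_edgeEl_self]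

lemma ghostImage_mul_edgeImage_of_ne (hes : Function.Injective es) (hr : ∀ i, G.r (es i) = w)
    (hP : ∀ i j, InCorner K G w (P i j))
    (hP'P : P' * P = Matrix.diagonal fun _ => vertexEl K G w) {e f : G.E} (hef : e ≠ f) :
    ghostImage es P' e * edgeImage es P f = 0 := by
  by_cases he : e ∈ Set.range es
  · obtain ⟨i, rfl⟩ := he
    by_cases hf : f ∈ Set.range es
    · obtain ⟨j, rfl⟩ := hf
      rw [ghostImage_mul_edgeImage_apply hes hr hP, hP'P,
        Matrix.diagonal_apply_ne _ fun h => hef (congrArg es h)]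
    · rw [edgeImage_of_notMem_range hf, ghostImage_mul_edgeEl_of_ne hes hf hef]
  · rw [ghostImage_of_notMem_range he, ghostEl_mul_edgeImage_of_ne hes he hef]

lemma sum_edgeImage_mul_ghostImage_apply (hes : Function.Injective es)
    (hr : ∀ i, G.r (es i) = w) (hPP' : P * P' = Matrix.diagonal fun _ => vertexEl K G w) :
    ∑ i, edgeImage es P (es i) * ghostImage es P' (es i) =
      ∑ k, edgeEl K G (es k) * ghostEl K G (es k) := by
  calc ∑ i, edgeImage es P (es i) * ghostImage es P' (es i)
      = ∑ k, ∑ l, edgeEl K G (es k) * (P * P') k l * ghostEl K G (es l) := by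
        simp only [edgeImage_apply hes, ghostImage_apply hes, Finset.sum_mul_sum]
        rw [Finset.sum_comm]
        refine Finset.sum_congr rfl fun k _ => ?_
        rw [Finset.sum_comm]
        simp only [Matrix.mul_apply, Finset.mul_sum, Finset.sum_mul, mul_assoc]
    _ = ∑ k, edgeEl K G (es k) * ghostEl K G (es k) := by
        refine Finset.sum_congr rfl fun k _ => ?_
        rw [hPP', Finset.sum_eq_single k (fun l _ hlk => by simp [hlk.symm]) (by simp),
          Matrix.diagonal_apply_eq, ← hr k, edgeEl_mul_vertexEl_range]

lemma sum_edgeImage_mul_ghostImage (hes : Function.Injective es) (hs : ∀ i, G.s (es i) = v)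
    (hr : ∀ i, G.r (es i) = w) (hPP' : P * P' = Matrix.diagonal fun _ => vertexEl K G w)
    {u : G.V} (hfin : {e : G.E | G.s e = u}.Finite) :
    ∑ e ∈ hfin.toFinset, edgeImage es P e * ghostImage es P' e =
      ∑ e ∈ hfin.toFinset, edgeEl K G e * ghostEl K G e := by
  classical
  have hoff : ∀ e ∉ Set.range es,
      edgeImage es P e * ghostImage es P' e = edgeEl K G e * ghostEl K G e := fun e he => by
    rw [edgeImage_of_notMem_range he, ghostImage_of_notMem_range he]
  by_cases hu : u = v
  · subst hu
    have hR : Finset.univ.image es ⊆ hfin.toFinset := by simp [Set.range_subset_iff, hs]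
    rw [← Finset.sum_sdiff hR,
      ← Finset.sum_sdiff hR (f := fun e => edgeEl K G e * ghostEl K G e),
      Finset.sum_image hes.injOn, Finset.sum_image hes.injOn,
      sum_edgeImage_mul_ghostImage_apply hes hr hPP']
    congr 1
    exact Finset.sum_congr rfl fun e he => hoff e (by simpa using (Finset.mem_sdiff.1 he).2)
  · refine Finset.sum_congr rfl fun e he => hoff e ?_
    rintro ⟨i, rfl⟩
    exact hu ((Set.Finite.mem_toFinset hfin).1 he ▸ hs i)

lemma genImage_rel {v w : G.V} (hes : Function.Injective es) (hs : ∀ i, G.s (es i) = v)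
    (hr : ∀ i, G.r (es i) = w) (hP : IsCornerGLPair K G w P P') ⦃x y : FreeAlgebra K (LGen G)⦄
    (h : LRel K G x y) :
    FreeAlgebra.lift K (genImage es P P') x = FreeAlgebra.lift K (genImage es P P') y := by
  obtain ⟨hPc, hP'c, hPP', hP'P⟩ := hP
  induction h <;> simp only [map_mul, map_zero, map_sum, FreeAlgebra.lift_ι_apply, genImage]
  case vertexIdem u => exact vertexEl_mul_self u
  case vertexOrth u u' h => exact vertexEl_mul_vertexEl_of_ne h
  case sourceEdge e => exact vertexEl_source_mul_edgeImage hes hs e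
  case edgeRange e => exact edgeImage_mul_vertexEl_range hes hr hPc e
  case ghostSource e => exact ghostImage_mul_vertexEl_source hes hs e
  case rangeGhost e => exact vertexEl_range_mul_ghostImage hes hr hP'c e
  case ghostEdgeSame e => exact ghostImage_mul_edgeImage_self hes hr hPc hP'P e
  case ghostEdgeNe e f h => exact ghostImage_mul_edgeImage_of_ne hes hr hPc hP'P h
  case ck2 u hfin hne =>
    rw [vertexEl_eq_sum u hfin hne, sum_edgeImage_mul_ghostImage hes hs hr hPP' hfin]

noncomputable def phiP {v w : G.V} (hes : Function.Injective es) (hs : ∀ i, G.s (es i) = v)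
    (hr : ∀ i, G.r (es i) = w) (hP : IsCornerGLPair K G w P P') : LPA K G →ₐ[K] LPA K G :=
  RingQuot.liftAlgHom K ⟨FreeAlgebra.lift K (genImage es P P'), genImage_rel hes hs hr hP⟩

lemma phiP_mk {v w : G.V} (hes : Function.Injective es) (hs : ∀ i, G.s (es i) = v)
    (hr : ∀ i, G.r (es i) = w) (hP : IsCornerGLPair K G w P P') (g : LGen G) :
    phiP hes hs hr hP (RingQuot.mkAlgHom K (LRel K G) (FreeAlgebra.ι K g)) =
      genImage es P P' g := by
  simp [phiP]

lemma phiProps_iff (hes : Function.Injective es) (φ : LPA K G →ₐ[K] LPA K G) :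
    PhiProps K G es P P' φ ↔
      ∀ g, φ (RingQuot.mkAlgHom K (LRel K G) (FreeAlgebra.ι K g)) = genImage es P P' g := by
  constructor
  · rintro ⟨hv, he, hg, hE, hG⟩ (u | e | e)
    · exact hv u
    · by_cases h : e ∈ Set.range es
      · obtain ⟨i, rfl⟩ := h
        exact (hE i).trans (edgeImage_apply hes i).symm
      · exact (he e h).trans (edgeImage_of_notMem_range h).symm
    · by_cases h : e ∈ Set.range es
      · obtain ⟨i, rfl⟩ := h
        exact (hG i).trans (ghostImage_apply hes i).symm
      · exact (hg e h).trans (ghostImage_of_notMem_range h).symm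
  · intro h
    exact ⟨fun u => h (.vertex u), fun e he => (h (.edge e)).trans (edgeImage_of_notMem_range he),
      fun e he => (h (.ghost e)).trans (ghostImage_of_notMem_range he),
      fun i => (h (.edge (es i))).trans (edgeImage_apply hes i),
      fun i => (h (.ghost (es i))).trans (ghostImage_apply hes i)⟩

lemma algHom_ext {φ ψ : LPA K G →ₐ[K] LPA K G}
    (h : ∀ g, φ (RingQuot.mkAlgHom K (LRel K G) (FreeAlgebra.ι K g)) =
      ψ (RingQuot.mkAlgHom K (LRel K G) (FreeAlgebra.ι K g))) : φ = ψ :=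
  RingQuot.ringQuot_ext' K φ ψ (FreeAlgebra.hom_ext (funext h))

lemma edgeImage_mem_lpaComponent (hes : Function.Injective es)
    (hP0 : ∀ i j, P i j ∈ lpaComponent K G 0) (e : G.E) :
    edgeImage es P e ∈ lpaComponent K G 1 := by
  by_cases he : e ∈ Set.range es
  · obtain ⟨i, rfl⟩ := he
    rw [edgeImage_apply hes]
    exact Submodule.sum_mem _ fun k _ => by
      simpa using mul_mem_lpaComponent (edgeEl_mem_lpaComponent (es k)) (hP0 k i)
  · simpa [edgeImage_of_notMem_range he] using edgeEl_mem_lpaComponent e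

lemma ghostImage_mem_lpaComponent (hes : Function.Injective es)
    (hP0 : ∀ i j, P' i j ∈ lpaComponent K G 0) (e : G.E) :
    ghostImage es P' e ∈ lpaComponent K G (-1) := by
  by_cases he : e ∈ Set.range es
  · obtain ⟨i, rfl⟩ := he
    rw [ghostImage_apply hes]
    exact Submodule.sum_mem _ fun k _ => by
      simpa using mul_mem_lpaComponent (hP0 i k) (ghostEl_mem_lpaComponent (es k))
  · simpa [ghostImage_of_notMem_range he] using ghostEl_mem_lpaComponent e

end Construction

end LeavittPath

theorem stmt5_general (K : Type) [Field K] (G : DirGraph) (n : ℕ)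
    (v w : G.V) (es : Fin n → G.E) (hes : Function.Injective es)
    (hs : ∀ i, G.s (es i) = v) (hr : ∀ i, G.r (es i) = w)
    (P P' : Matrix (Fin n) (Fin n) (LPA K G))
    (hP : IsCornerGLPair K G w P P')
    (hP0 : ∀ i j, P i j ∈ lpaComponent K G 0 ∧ P' i j ∈ lpaComponent K G 0) :
    ∃! φ : LPA K G →ₐ[K] LPA K G,
      (∀ d : ℤ, ∀ x ∈ lpaComponent K G d, φ x ∈ lpaComponent K G d) ∧
      PhiProps K G es P P' φ := by
  open LeavittPath in
  have hφ := phiP_mk hes hs hr hP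
  refine ⟨phiP hes hs hr hP, ⟨fun d x hx => map_mem_lpaComponent (fun u => ?_) (fun e => ?_)
    (fun e => ?_) hx, (phiProps_iff hes _).2 hφ⟩, fun ψ hψ => algHom_ext fun g => ?_⟩
  · rw [vertexEl, hφ]
    exact vertexEl_mem_lpaComponent u
  · rw [edgeEl, hφ]
    exact edgeImage_mem_lpaComponent hes (fun i j => (hP0 i j).1) e
  · rw [ghostEl, hφ]
    exact ghostImage_mem_lpaComponent hes (fun i j => (hP0 i j).2) e
  · rw [(phiProps_iff hes ψ).1 hψ.2, hφ]

/-- If `P ∈ GL_n(w L_K(E)_0 w)` (all entries of `P` and `P'` lie in the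
degree-zero component), then there is a unique *graded* `K`-algebra homomorphism
`φ_P : L_K(E) → L_K(E)` with the defining properties. -/
theorem stmt5 (K : Type) [Field K] (G : DirGraph) (n : ℕ) (hn : 0 < n)
    (v w : G.V) (es : Fin n → G.E) (hes : Function.Injective es)
    (hs : ∀ i, G.s (es i) = v) (hr : ∀ i, G.r (es i) = w)
    (P P' : Matrix (Fin n) (Fin n) (LPA K G))
    (hP : IsCornerGLPair K G w P P')
    (hP0 : ∀ i j, P i j ∈ lpaComponent K G 0 ∧ P' i j ∈ lpaComponent K G 0) :
    ∃! φ : LPA K G →ₐ[K] LPA K G,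
      (∀ d : ℤ, ∀ x ∈ lpaComponent K G d, φ x ∈ lpaComponent K G d) ∧
      PhiProps K G es P P' φ :=
  stmt5_general K G n v w es hes hs hr P P' hP hP0
end

section
/- Let n ≥ 2 be an integer, K a field, and R_n the rose graph with n petals. Then the map Φ : GL_n(K) → Aut^{gr}(L_K(R_n)), P ↦ φ_P, is an injective group homomorphism from the general linear group GL_n(K) into the group of graded K-algebra automorphisms of L_K(R_n). -/
/-!
`L_K(R_n)` is universal for the relations `e_i* e_j = δ_ij`, `Σ_i e_i e_i* = 1`. For an
invertible matrix `A` over `L_K(R_n)`, the row `e A` and the column `A⁻¹ e*` satisfy them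
again, because `(A⁻¹ e*)(e A) = A⁻¹ (e* e) A = 1` and `(e A)(A⁻¹ e*) = e e* = 1`; this defines
`φ_A`. A scalar matrix is fixed by every `φ_P`, so `φ_P ∘ φ_Q = φ_{PQ}` and `P ↦ φ_P` is
a group homomorphism into the units of the endomorphism monoid, i.e. into the automorphisms.
It is injective because `e_i* φ_P(e_j) = p_ij` and `L_K(R_n) ≠ 0`, the latter witnessed by
shift operators on `K^ℕ` built from a bijection `ℕ ≃ ℕ × Fin n`. It preserves the grading since
`φ_P` maps edges into the span of the edges and ghost edges into the span of the ghost edges.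
-/

/-- Generators of the Leavitt path algebra of the rose with `n` petals:
the edges `e_1, …, e_n` and the ghost edges `e_1*, …, e_n*` (the single vertex `v` is the
identity `1`). -/
inductive RGen (n : ℕ) : Type
  | e : Fin n → RGen n
  | g : Fin n → RGen n

/-- The defining relations of `L_K(R_n)`: `e_i* e_j = δ_{ij} v` and `Σ_i e_i e_i* = v`,
where `v = 1`. -/
inductive RoseRel (K : Type) [Field K] (n : ℕ) :
    FreeAlgebra K (RGen n) → FreeAlgebra K (RGen n) → Prop
  | ghostEdgeSame (i : Fin n) :
      RoseRel K n (FreeAlgebra.ι K (RGen.g i) * FreeAlgebra.ι K (RGen.e i)) 1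
  | ghostEdgeNe (i j : Fin n) (h : i ≠ j) :
      RoseRel K n (FreeAlgebra.ι K (RGen.g i) * FreeAlgebra.ι K (RGen.e j)) 0
  | ck2 :
      RoseRel K n (∑ i : Fin n, FreeAlgebra.ι K (RGen.e i) * FreeAlgebra.ι K (RGen.g i)) 1

/-- The Leavitt path algebra `L_K(R_n)` of the rose with `n` petals. -/
abbrev LRose (K : Type) [Field K] (n : ℕ) : Type := RingQuot (RoseRel K n)

/-- The edge `e_i` as an element of `L_K(R_n)`. -/
noncomputable def ee (K : Type) [Field K] (n : ℕ) (i : Fin n) : LRose K n :=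
  RingQuot.mkAlgHom K (RoseRel K n) (FreeAlgebra.ι K (RGen.e i))

/-- The ghost edge `e_i*` as an element of `L_K(R_n)`. -/
noncomputable def gg (K : Type) [Field K] (n : ℕ) (i : Fin n) : LRose K n :=
  RingQuot.mkAlgHom K (RoseRel K n) (FreeAlgebra.ι K (RGen.g i))

/-- The degree `d` component of the ℤ-grading of `L_K(R_n)`: the `K`-span of the
elements `p q*` with `|p| - |q| = d`. -/
noncomputable def rComponent (K : Type) [Field K] (n : ℕ) (d : ℤ) :
    Submodule K (LRose K n) :=
  Submodule.span K {x : LRose K n | ∃ p q : List (Fin n),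
    (p.length : ℤ) - (q.length : ℤ) = d ∧
    x = (p.map (ee K n)).prod * (q.reverse.map (gg K n)).prod}

/-- A map is graded when it preserves every homogeneous component. -/
def RGraded (K : Type) [Field K] (n : ℕ) (f : LRose K n → LRose K n) : Prop :=
  ∀ d : ℤ, ∀ x ∈ rComponent K n d, f x ∈ rComponent K n d

/-- The defining property of the endomorphism `φ_P` of `L_K(R_n)` attached to a matrix
`P` with inverse `P'`: it sends `e_i ↦ Σ_k e_k p_{k i}` and `e_i* ↦ Σ_k p'_{i k} e_k*`
(and `v = 1 ↦ 1` automatically). -/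
def RPhiProps (K : Type) [Field K] (n : ℕ) (P P' : Matrix (Fin n) (Fin n) (LRose K n))
    (φ : LRose K n →ₐ[K] LRose K n) : Prop :=
  (∀ i, φ (ee K n i) = ∑ k, ee K n k * P k i) ∧
  (∀ i, φ (gg K n i) = ∑ k, P' i k * gg K n k)

open Matrix

section ScalarMatrix

variable {K A B m : Type*} [CommSemiring K] [Semiring A] [Algebra K A] [Semiring B] [Algebra K B]
  [Fintype m]

theorem AlgHom.map_vecMul_map_algebraMap (f : A →ₐ[K] B) (v : m → A) (M : Matrix m m K)
    (i : m) :
    f ((v ᵥ* M.map (algebraMap K A)) i) = ((f ∘ v) ᵥ* M.map (algebraMap K B)) i := by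
  rw [← f.coe_toRingHom, RingHom.map_vecMul, Matrix.map_map, f.coe_toRingHom]
  simp only [Function.comp_def (f := f), AlgHom.commutes]

theorem AlgHom.map_mulVec_map_algebraMap (f : A →ₐ[K] B) (M : Matrix m m K) (v : m → A)
    (i : m) :
    f ((M.map (algebraMap K A) *ᵥ v) i) = (M.map (algebraMap K B) *ᵥ (f ∘ v)) i := by
  rw [← f.coe_toRingHom, RingHom.map_mulVec, Matrix.map_map, f.coe_toRingHom]
  simp only [Function.comp_def (f := f), AlgHom.commutes]

theorem Matrix.vecMul_map_algebraMap_mem_span (v : m → A) (M : Matrix m m K) (i : m) :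
    (v ᵥ* M.map (algebraMap K A)) i ∈ Submodule.span K (Set.range v) := by
  simp only [vecMul, dotProduct, Matrix.map_apply]
  refine Submodule.sum_mem _ fun k _ => ?_
  rw [← Algebra.commutes, ← Algebra.smul_def]
  exact Submodule.smul_mem _ _ (Submodule.subset_span ⟨k, rfl⟩)

theorem Matrix.mulVec_map_algebraMap_mem_span (M : Matrix m m K) (v : m → A) (i : m) :
    (M.map (algebraMap K A) *ᵥ v) i ∈ Submodule.span K (Set.range v) := by
  simp only [mulVec, dotProduct, Matrix.map_apply]
  refine Submodule.sum_mem _ fun k _ => ?_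
  rw [← Algebra.smul_def]
  exact Submodule.smul_mem _ _ (Submodule.subset_span ⟨k, rfl⟩)

end ScalarMatrix

theorem Submodule.list_prod_map_mem_span {R A ι κ : Type*} [CommSemiring R] [Semiring A]
    [Algebra R A] {f : ι → A} {g : κ → A} (hg : ∀ k, g k ∈ Submodule.span R (Set.range f))
    (l : List κ) :
    (l.map g).prod ∈
      Submodule.span R {y | ∃ p : List ι, p.length = l.length ∧ (p.map f).prod = y} := by
  induction l with
  | nil => exact Submodule.subset_span ⟨[], rfl, rfl⟩
  | cons k l ih =>
    rw [List.map_cons, List.prod_cons]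
    have hmem := Submodule.mul_mem_mul (hg k) ih
    rw [Submodule.span_mul_span] at hmem
    refine Submodule.span_mono ?_ hmem
    rintro _ ⟨_, ⟨i, rfl⟩, _, ⟨p, hp, rfl⟩, rfl⟩
    exact ⟨i :: p, by simp [hp], by simp⟩

section Shift

variable (K : Type*) [CommSemiring K] {X ι : Type*} [DecidableEq ι] (E : X ≃ X × ι)

def shiftGhost (i : ι) : Module.End K (X → K) :=
  LinearMap.funLeft K K fun x => E.symm (x, i)

/-- `(shiftEdge K E i f) x = f y` if `E x = (y, i)`, and `0` otherwise. -/
def shiftEdge (i : ι) : Module.End K (X → K) :=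
  LinearMap.pi fun x => if (E x).2 = i then LinearMap.proj (E x).1 else 0

theorem shiftGhost_mul_shiftEdge (i j : ι) :
    shiftGhost K E i * shiftEdge K E j = if i = j then 1 else 0 := by
  ext f x
  split_ifs <;> simp [shiftGhost, shiftEdge, *]

theorem sum_shiftEdge_mul_shiftGhost [Fintype ι] :
    ∑ i, shiftEdge K E i * shiftGhost K E i = 1 := by
  ext f x
  simp [shiftGhost, shiftEdge, apply_ite DFunLike.coe, ite_apply]

end Shift

namespace LRose

variable {K : Type} [Field K] {n : ℕ}

theorem gg_mul_ee (i j : Fin n) : gg K n i * ee K n j = if i = j then 1 else 0 := by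
  split_ifs with h
  · subst h
    rw [gg, ee, ← map_mul, RingQuot.mkAlgHom_rel K (RoseRel.ghostEdgeSame i), map_one]
  · rw [gg, ee, ← map_mul, RingQuot.mkAlgHom_rel K (RoseRel.ghostEdgeNe i j h), map_zero]

theorem sum_ee_mul_gg : ∑ i, ee K n i * gg K n i = 1 := by
  simpa only [ee, gg, map_sum, map_mul, map_one] using
    RingQuot.mkAlgHom_rel K (RoseRel.ck2 (K := K) (n := n))

theorem algHom_ext {A : Type*} [Semiring A] [Algebra K A] {φ ψ : LRose K n →ₐ[K] A}
    (he : ∀ i, φ (ee K n i) = ψ (ee K n i)) (hg : ∀ i, φ (gg K n i) = ψ (gg K n i)) :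
    φ = ψ := by
  refine RingQuot.ringQuot_ext' K _ _ (FreeAlgebra.hom_ext (funext fun x => ?_))
  cases x with
  | e i => exact he i
  | g i => exact hg i

section Lift

variable {A : Type*} [Semiring A] [Algebra K A] (E G : Fin n → A)
  (hGE : ∀ i j, G i * E j = if i = j then 1 else 0) (hEG : ∑ i, E i * G i = 1)

noncomputable def lift : LRose K n →ₐ[K] A :=
  RingQuot.liftAlgHom K ⟨FreeAlgebra.lift K fun | RGen.e i => E i | RGen.g i => G i, by
    intro x y h
    cases h with
    | ghostEdgeSame i => simpa [FreeAlgebra.lift_ι_apply] using hGE i i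
    | ghostEdgeNe i j hij => simpa [FreeAlgebra.lift_ι_apply, hij] using hGE i j
    | ck2 => simpa [FreeAlgebra.lift_ι_apply] using hEG⟩

@[simp]
theorem lift_ee (i : Fin n) : lift E G hGE hEG (ee K n i) = E i := by
  rw [lift, ee, RingQuot.liftAlgHom_mkAlgHom_apply, FreeAlgebra.lift_ι_apply]

@[simp]
theorem lift_gg (i : Fin n) : lift E G hGE hEG (gg K n i) = G i := by
  rw [lift, gg, RingQuot.liftAlgHom_mkAlgHom_apply, FreeAlgebra.lift_ι_apply]

end Lift

instance [NeZero n] : Nontrivial (LRose K n) :=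
  (lift (K := K) _ _ (shiftGhost_mul_shiftEdge K (Nat.divModEquiv n))
    (sum_shiftEdge_mul_shiftGhost K (Nat.divModEquiv n))).toRingHom.domain_nontrivial

theorem mulVec_gg_mul_ee (B : Matrix (Fin n) (Fin n) (LRose K n)) (i l : Fin n) :
    (B *ᵥ gg K n) i * ee K n l = B i l := by
  simp [mulVec, dotProduct, Finset.sum_mul, mul_assoc, gg_mul_ee]

theorem mulVec_gg_mul_vecMul_ee (A B : Matrix (Fin n) (Fin n) (LRose K n)) (i j : Fin n) :
    (B *ᵥ gg K n) i * (ee K n ᵥ* A) j = (B * A) i j := by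
  simp only [vecMul, dotProduct, Finset.mul_sum, ← mul_assoc, mulVec_gg_mul_ee, mul_apply]

theorem gg_mul_vecMul_ee (A : Matrix (Fin n) (Fin n) (LRose K n)) (i j : Fin n) :
    gg K n i * (ee K n ᵥ* A) j = A i j := by
  simpa using mulVec_gg_mul_vecMul_ee A 1 i j

theorem dotProduct_vecMul_ee_mulVec_gg (A B : Matrix (Fin n) (Fin n) (LRose K n))
    (h : A * B = 1) : (ee K n ᵥ* A) ⬝ᵥ (B *ᵥ gg K n) = 1 := by
  rw [← dotProduct_mulVec, mulVec_mulVec, h, one_mulVec]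
  exact sum_ee_mul_gg

noncomputable def matrixEndo (A : (Matrix (Fin n) (Fin n) (LRose K n))ˣ) :
    LRose K n →ₐ[K] LRose K n :=
  lift (ee K n ᵥ* ↑A) (↑A⁻¹ *ᵥ gg K n)
    (fun i j => by rw [mulVec_gg_mul_vecMul_ee, A.inv_mul, one_apply])
    (dotProduct_vecMul_ee_mulVec_gg _ _ A.mul_inv)

@[simp]
theorem matrixEndo_ee (A : (Matrix (Fin n) (Fin n) (LRose K n))ˣ) (i : Fin n) :
    matrixEndo A (ee K n i) = (ee K n ᵥ* ↑A) i :=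
  lift_ee ..

@[simp]
theorem matrixEndo_gg (A : (Matrix (Fin n) (Fin n) (LRose K n))ˣ) (i : Fin n) :
    matrixEndo A (gg K n i) = (↑A⁻¹ *ᵥ gg K n) i :=
  lift_gg ..

theorem matrixEndo_comp_ee (A : (Matrix (Fin n) (Fin n) (LRose K n))ˣ) :
    ⇑(matrixEndo A) ∘ ee K n = ee K n ᵥ* ↑A :=
  funext (matrixEndo_ee A)

theorem matrixEndo_comp_gg (A : (Matrix (Fin n) (Fin n) (LRose K n))ˣ) :
    ⇑(matrixEndo A) ∘ gg K n = ↑A⁻¹ *ᵥ gg K n :=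
  funext (matrixEndo_gg A)

noncomputable def phi : GL (Fin n) K →* (LRose K n →ₐ[K] LRose K n) where
  toFun P := matrixEndo (Units.map (algebraMap K (LRose K n)).mapMatrix.toMonoidHom P)
  map_one' := algHom_ext (by simp) (by simp)
  map_mul' P Q := by
    refine algHom_ext (fun i => ?_) (fun i => ?_)
    · simp [AlgHom.map_vecMul_map_algebraMap, matrixEndo_comp_ee, vecMul_vecMul]
    · simp [AlgHom.map_mulVec_map_algebraMap, matrixEndo_comp_gg, mulVec_mulVec]

theorem rGraded_of_map_mem_span (φ : LRose K n →ₐ[K] LRose K n)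
    (he : ∀ i, φ (ee K n i) ∈ Submodule.span K (Set.range (ee K n)))
    (hg : ∀ i, φ (gg K n i) ∈ Submodule.span K (Set.range (gg K n))) :
    RGraded K n φ := by
  intro d x hx
  refine (Submodule.span_le (p := (rComponent K n d).comap φ.toLinearMap)).mpr ?_ hx
  rintro _ ⟨p, q, hd, rfl⟩
  have hmem := Submodule.mul_mem_mul
    (Submodule.list_prod_map_mem_span he p) (Submodule.list_prod_map_mem_span hg q.reverse)
  rw [Submodule.span_mul_span] at hmem
  simp only [SetLike.mem_coe, Submodule.mem_comap, AlgHom.toLinearMap_apply, map_mul,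
    map_list_prod, List.map_map]
  refine Submodule.span_mono ?_ hmem
  rintro _ ⟨_, ⟨p', hp', rfl⟩, _, ⟨q', hq', rfl⟩, rfl⟩
  exact ⟨p', q'.reverse, by simp_all, by rw [List.reverse_reverse]⟩

theorem phi_apply_ee (P : GL (Fin n) K) (i : Fin n) :
    phi P (ee K n i) =
      (ee K n ᵥ* (P : Matrix (Fin n) (Fin n) K).map (algebraMap K (LRose K n))) i :=
  matrixEndo_ee _ i

theorem phi_apply_gg (P : GL (Fin n) K) (i : Fin n) :
    phi P (gg K n i) =
      ((↑P⁻¹ : Matrix (Fin n) (Fin n) K).map (algebraMap K (LRose K n)) *ᵥ gg K n) i :=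
  matrixEndo_gg _ i

theorem gg_mul_phi_ee (P : GL (Fin n) K) (i j : Fin n) :
    gg K n i * phi P (ee K n j) = algebraMap K (LRose K n) ((P : Matrix (Fin n) (Fin n) K) i j) :=
  phi_apply_ee P j ▸ gg_mul_vecMul_ee _ i j

theorem phi_injective [NeZero n] : Function.Injective (phi (K := K) (n := n)) := by
  intro P Q h
  ext i j
  apply (algebraMap K (LRose K n)).injective
  rw [← gg_mul_phi_ee, ← gg_mul_phi_ee, h]

theorem rGraded_phi (P : GL (Fin n) K) : RGraded K n (phi P) :=
  rGraded_of_map_mem_span _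
    (fun i => phi_apply_ee P i ▸ vecMul_map_algebraMap_mem_span _ _ i)
    (fun i => phi_apply_gg P i ▸ mulVec_map_algebraMap_mem_span _ _ i)

end LRose

/-- The map `Φ : GL_n(K) → Aut^{gr}(L_K(R_n))`, `P ↦ φ_P`, is an
injective group homomorphism. -/
theorem stmt7 (K : Type) [Field K] (n : ℕ) (hn : 2 ≤ n) :
    ∃ Φ : GL (Fin n) K →* (LRose K n ≃ₐ[K] LRose K n),
      Function.Injective ⇑Φ ∧
      ∀ P : GL (Fin n) K,
        RGraded K n ⇑(Φ P) ∧
        (∀ i, (Φ P) (ee K n i) =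
          ∑ k, ee K n k * algebraMap K (LRose K n) ((P : Matrix (Fin n) (Fin n) K) k i)) ∧
        (∀ i, (Φ P) (gg K n i) =
          ∑ k, algebraMap K (LRose K n) (((P⁻¹ : GL (Fin n) K) : Matrix (Fin n) (Fin n) K) i k)
            * gg K n k) := by
  have : NeZero n := ⟨by omega⟩
  refine ⟨(AlgEquiv.algHomUnitsEquiv K (LRose K n)).toMonoidHom.comp LRose.phi.toHomUnits,
    fun P Q h => LRose.phi_injective (K := K) (congrArg AlgEquiv.toAlgHom h),
    fun P => ⟨LRose.rGraded_phi P, LRose.phi_apply_ee P, LRose.phi_apply_gg P⟩⟩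
end

section
/- Let n ≥ 2 be an integer, K a field, and R_n the rose graph with n petals. For every unital K-algebra endomorphism λ of L_K(R_n), the element x := Σ_{i=1}^n λ(e_i) e_i* is a unit of L_K(R_n), and λ = f_x. In particular, if τ_u is the inner automorphism r ↦ u^{-1} r u of L_K(R_n) generated by a unit u, then τ_u = f_x where x = u^{-1}(Σ_{i=1}^n e_i u e_i*). -/
/-! The edges and ghost edges of the rose form a Cuntz family, and an algebra endomorphism carries
it to another Cuntz family `(e', g')`. Any two Cuntz families are conjugate: by the orthogonality
relations `x = ∑ e'ᵢ gᵢ` is a unit with inverse `∑ eᵢ g'ᵢ`, and `e' = x e`, `g' = g x⁻¹`. The inner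
automorphism `τ_u` is the special case `λ = τ_u`, because an algebra endomorphism of `L_K(R_n)` is
determined by its values on the generators. -/

structure IsCuntzFamily {ι A : Type*} [Fintype ι] [DecidableEq ι] [Semiring A]
    (e g : ι → A) : Prop where
  g_mul_e : ∀ i j, g i * e j = if i = j then 1 else 0
  sum_e_mul_g : ∑ i, e i * g i = 1

namespace IsCuntzFamily

variable {ι A B : Type*} [Fintype ι] [DecidableEq ι] [Semiring A] [Semiring B]
  {e g e' g' : ι → A}

theorem sum_mul_g_mul_e (h : IsCuntzFamily e g) (a : ι → A) (i : ι) :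
    (∑ j, a j * g j) * e i = a i := by
  simp [Finset.sum_mul, mul_assoc, h.g_mul_e]

theorem g_mul_sum_e_mul (h : IsCuntzFamily e g) (b : ι → A) (i : ι) :
    g i * ∑ j, e j * b j = b i := by
  simp [Finset.mul_sum, ← mul_assoc, h.g_mul_e]

theorem map {F : Type*} [FunLike F A B] [RingHomClass F A B] (h : IsCuntzFamily e g) (f : F) :
    IsCuntzFamily (f ∘ e) (f ∘ g) where
  g_mul_e i j := by simp only [Function.comp_apply, ← map_mul, h.g_mul_e, apply_ite f, map_one,
    map_zero]
  sum_e_mul_g := by simp only [Function.comp_apply, ← map_mul, ← map_sum, h.sum_e_mul_g, map_one]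

theorem sum_mul_sum_eq_one (h : IsCuntzFamily e g) (h' : IsCuntzFamily e' g') :
    (∑ i, e' i * g i) * ∑ i, e i * g' i = 1 := by
  simp_rw [Finset.sum_mul, mul_assoc, h.g_mul_sum_e_mul, h'.sum_e_mul_g]

theorem exists_transition_unit (h : IsCuntzFamily e g) (h' : IsCuntzFamily e' g') :
    ∃ y : A, (∑ i, e' i * g i) * y = 1 ∧ y * (∑ i, e' i * g i) = 1 ∧
      (∀ i, e' i = (∑ j, e' j * g j) * e i) ∧ ∀ i, g' i = g i * y :=
  ⟨∑ i, e i * g' i, h.sum_mul_sum_eq_one h', h'.sum_mul_sum_eq_one h,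
    fun i => (h.sum_mul_g_mul_e e' i).symm, fun i => (h.g_mul_sum_e_mul g' i).symm⟩

end IsCuntzFamily

section LRose

variable {K : Type} [Field K] {n : ℕ}

theorem isCuntzFamily_ee_gg : IsCuntzFamily (ee K n) (gg K n) where
  g_mul_e i j := by
    unfold gg ee
    rw [← map_mul]
    split_ifs with h
    · subst h
      simp [RingQuot.mkAlgHom_rel K (RoseRel.ghostEdgeSame i)]
    · simp [RingQuot.mkAlgHom_rel K (RoseRel.ghostEdgeNe i j h)]
  sum_e_mul_g := by
    simpa [ee, gg, map_sum, map_mul] using RingQuot.mkAlgHom_rel K (RoseRel.ck2 (K := K) (n := n))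

theorem LRose.algHom_ext_s9 {B : Type*} [Semiring B] [Algebra K B] {f f' : LRose K n →ₐ[K] B}
    (he : ∀ i, f (ee K n i) = f' (ee K n i)) (hg : ∀ i, f (gg K n i) = f' (gg K n i)) :
    f = f' := by
  ext x
  cases x with
  | e i => exact he i
  | g i => exact hg i

end LRose

theorem stmt9_general (K : Type) [Field K] (n : ℕ) :
    (∀ lam : LRose K n →ₐ[K] LRose K n,
      ∃ y : LRose K n,
        (∑ i, lam (ee K n i) * gg K n i) * y = 1 ∧
        y * (∑ i, lam (ee K n i) * gg K n i) = 1 ∧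
        (∀ i, lam (ee K n i) = (∑ j, lam (ee K n j) * gg K n j) * ee K n i) ∧
        (∀ i, lam (gg K n i) = gg K n i * y)) ∧
    (∀ u u' : LRose K n, u * u' = 1 → u' * u = 1 →
      ∃ y : LRose K n,
        (u' * ∑ i, ee K n i * u * gg K n i) * y = 1 ∧
        y * (u' * ∑ i, ee K n i * u * gg K n i) = 1 ∧
        ∀ μ : LRose K n →ₐ[K] LRose K n,
          (∀ i, μ (ee K n i) = (u' * ∑ j, ee K n j * u * gg K n j) * ee K n i) →
          (∀ i, μ (gg K n i) = gg K n i * y) →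
          ∀ r : LRose K n, μ r = u' * r * u) := by
  have hfam : IsCuntzFamily (ee K n) (gg K n) := isCuntzFamily_ee_gg
  refine ⟨fun lam => hfam.exists_transition_unit (hfam.map lam), ?_⟩
  intro u u' huu' hu'u
  let τ : LRose K n →ₐ[K] LRose K n :=
    MulSemiringAction.toAlgHom K _ (ConjAct.toConjAct (⟨u', u, hu'u, huu'⟩ : (LRose K n)ˣ))
  have hτ (r : LRose K n) : τ r = u' * r * u := rfl
  have hx : ∑ i, τ (ee K n i) * gg K n i = u' * ∑ i, ee K n i * u * gg K n i := by
    simp only [hτ, Finset.mul_sum, mul_assoc]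
  obtain ⟨y, hxy, hyx, hτe, hτg⟩ := hfam.exists_transition_unit (hfam.map τ)
  simp only [Function.comp_apply, hx] at hxy hyx hτe hτg
  refine ⟨y, hxy, hyx, fun μ hμe hμg r => ?_⟩
  have hμτ : μ = τ := LRose.algHom_ext_s9 (fun i => (hμe i).trans (hτe i).symm)
    (fun i => (hμg i).trans (hτg i).symm)
  rw [hμτ, hτ]

/-- Every unital `K`-algebra endomorphism `λ` of `L_K(R_n)` equals
`f_x` for the unit `x = Σ_i λ(e_i) e_i*`; in particular the inner automorphism
`τ_u : r ↦ u^{-1} r u` equals `f_x` for `x = u^{-1}(Σ_i e_i u e_i*)`. -/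
theorem stmt9 (K : Type) [Field K] (n : ℕ) (hn : 2 ≤ n) :
    (∀ lam : LRose K n →ₐ[K] LRose K n,
      ∃ y : LRose K n,
        (∑ i, lam (ee K n i) * gg K n i) * y = 1 ∧
        y * (∑ i, lam (ee K n i) * gg K n i) = 1 ∧
        (∀ i, lam (ee K n i) = (∑ j, lam (ee K n j) * gg K n j) * ee K n i) ∧
        (∀ i, lam (gg K n i) = gg K n i * y)) ∧
    (∀ u u' : LRose K n, u * u' = 1 → u' * u = 1 →
      ∃ y : LRose K n,
        (u' * ∑ i, ee K n i * u * gg K n i) * y = 1 ∧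
        y * (u' * ∑ i, ee K n i * u * gg K n i) = 1 ∧
        ∀ μ : LRose K n →ₐ[K] LRose K n,
          (∀ i, μ (ee K n i) = (u' * ∑ j, ee K n j * u * gg K n j) * ee K n i) →
          (∀ i, μ (gg K n i) = gg K n i * y) →
          ∀ r : LRose K n, μ r = u' * r * u) :=
  stmt9_general K n
end
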